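/- arXiv:2602.01417 — 4 statements merged into one kernel-verified Lean document; each statement's English description precedes it below -/
import Mathlib

section
/- Let Δ be a random variable taking values in {-1, 0, 1} and β an integrable random variable, both on a probability space, and suppose that either P(Δ ≥ 0) = 1 or P(Δ ≤ 0) = 1 (weak monotonicity). If P(Δ ≠ 0) > 0, then E[β·Δ] = E[β | Δ ≠ 0] · E[Δ]. -/
/-!
Under weak monotonicity Δ takes, almost surely, only the values 0 and a single constant c = ±1,
so Δ = c · 1_S a.e. with S = {Δ ≠ 0}. Then E[βΔ] = c ∫_S β and E[Δ] = c μ(S), and dividing the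
first by μ(S) > 0 gives the conditional mean of β on S times E[Δ].
-/

open MeasureTheory Function

lemma eq_indicator_support_of_eq_zero_or_eq {α M : Type*} [Zero M] {f : α → M} {c : M} {x : α}
    (h : f x = 0 ∨ f x = c) : f x = (support f).indicator (fun _ => c) x := by
  by_cases hx : f x = 0
  · simp [hx]
  · rw [Set.indicator_of_mem (show x ∈ support f from hx), h.resolve_left hx]

lemma ae_eq_indicator_support_of_weakly_monotone {Ω : Type*} [MeasurableSpace Ω] {μ : Measure Ω}
    {Δ : Ω → ℝ} (hΔval : ∀ ω, Δ ω = -1 ∨ Δ ω = 0 ∨ Δ ω = 1)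
    (hmono : (∀ᵐ ω ∂μ, 0 ≤ Δ ω) ∨ (∀ᵐ ω ∂μ, Δ ω ≤ 0)) :
    ∃ c : ℝ, Δ =ᵐ[μ] (support Δ).indicator (fun _ => c) := by
  rcases hmono with hnonneg | hnonpos
  · refine ⟨1, hnonneg.mono fun ω hω => eq_indicator_support_of_eq_zero_or_eq ?_⟩
    rcases hΔval ω with h | h | h <;> first | linarith | simp [h]
  · refine ⟨-1, hnonpos.mono fun ω hω => eq_indicator_support_of_eq_zero_or_eq ?_⟩
    rcases hΔval ω with h | h | h <;> first | linarith | simp [h]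

lemma integral_mul_indicator_const {Ω : Type*} [MeasurableSpace Ω] {μ : Measure Ω} {S : Set Ω}
    (hS : MeasurableSet S) (β : Ω → ℝ) (c : ℝ) :
    ∫ ω, β ω * S.indicator (fun _ => c) ω ∂μ = (∫ ω in S, β ω ∂μ) * c := by
  simp_rw [← Set.indicator_mul_right]
  rw [integral_indicator hS, integral_mul_const]

theorem integral_mul_eq_setAverage_mul_integral {Ω : Type*} [MeasurableSpace Ω] {μ : Measure Ω}
    {Δ : Ω → ℝ} (β : Ω → ℝ) {c : ℝ} (hΔ : Δ =ᵐ[μ] (support Δ).indicator (fun _ => c))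
    (hS : MeasurableSet (support Δ)) (hμS : μ.real (support Δ) ≠ 0) :
    ∫ ω, β ω * Δ ω ∂μ = ((∫ ω in support Δ, β ω ∂μ) / μ.real (support Δ)) * ∫ ω, Δ ω ∂μ := by
  have hβΔ : ∫ ω, β ω * Δ ω ∂μ = (∫ ω in support Δ, β ω ∂μ) * c := by
    rw [← integral_mul_indicator_const hS β c]
    exact integral_congr_ae (hΔ.mono fun ω hω => congrArg (β ω * ·) hω)
  have hΔint : ∫ ω, Δ ω ∂μ = μ.real (support Δ) * c := by
    rw [integral_congr_ae hΔ, integral_indicator_const c hS, smul_eq_mul]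
  rw [hβΔ, hΔint]
  field_simp

theorem stmt0_general {Ω : Type*} [MeasurableSpace Ω] (μ : Measure Ω) [IsProbabilityMeasure μ]
    (Δ β : Ω → ℝ) (hΔmeas : Measurable Δ)
    (hΔval : ∀ ω, Δ ω = -1 ∨ Δ ω = 0 ∨ Δ ω = 1)
    (hmono : (∀ᵐ ω ∂μ, 0 ≤ Δ ω) ∨ (∀ᵐ ω ∂μ, Δ ω ≤ 0))
    (hpos : 0 < μ {ω | Δ ω ≠ 0}) :
    ∫ ω, β ω * Δ ω ∂μ =
      ((∫ ω in {ω | Δ ω ≠ 0}, β ω ∂μ) / (μ {ω | Δ ω ≠ 0}).toReal) * ∫ ω, Δ ω ∂μ := by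
  obtain ⟨c, hΔ⟩ := ae_eq_indicator_support_of_weakly_monotone hΔval hmono
  have hμS : μ.real (support Δ) ≠ 0 := (measureReal_ne_zero_iff).2 hpos.ne'
  exact integral_mul_eq_setAverage_mul_integral β hΔ (measurableSet_support hΔmeas) hμS

/-- Weak monotonicity: if Δ takes values in {-1,0,1}, β is integrable, and either
Δ ≥ 0 a.s. or Δ ≤ 0 a.s., with P(Δ ≠ 0) > 0, then E[βΔ] = E[β | Δ ≠ 0] · E[Δ]. -/
theorem stmt0 {Ω : Type*} [MeasurableSpace Ω] (μ : Measure Ω) [IsProbabilityMeasure μ]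
    (Δ β : Ω → ℝ) (hΔmeas : Measurable Δ)
    (hΔval : ∀ ω, Δ ω = -1 ∨ Δ ω = 0 ∨ Δ ω = 1)
    (hβ : Integrable β μ)
    (hmono : (∀ᵐ ω ∂μ, 0 ≤ Δ ω) ∨ (∀ᵐ ω ∂μ, Δ ω ≤ 0))
    (hpos : 0 < μ {ω | Δ ω ≠ 0}) :
    ∫ ω, β ω * Δ ω ∂μ =
      ((∫ ω in {ω | Δ ω ≠ 0}, β ω ∂μ) / (μ {ω | Δ ω ≠ 0}).toReal) * ∫ ω, Δ ω ∂μ :=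
  stmt0_general μ Δ β hΔmeas hΔval hmono hpos
end

section
/- Let δ be a real-valued random variable that takes both a strictly positive value and a strictly negative value with positive probability, and suppose that additionally arbitrarily small such values are attainable in the following sense: for every ε > 0 there exist values d₊ ∈ (0, ε) and d₋ ∈ (−ε, 0) each taken by δ with positive probability. If c₀, c₁ ∈ ℝ are such that (c₀ + c₁·δ)·δ ≥ 0 almost surely for every such distribution of δ, then c₀ = 0 and c₁ ≥ 0. -/
open MeasureTheory ProbabilityTheory Filter Topology Set

/-! The affine map `d ↦ c₀ + c₁ d` must be `≥ 0` at positive values of `δ` and `≤ 0` at negative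
ones; when both occur arbitrarily close to `0`, continuity forces `c₀ = 0`, and then
`c₁ d² ≥ 0` gives `c₁ ≥ 0`. It therefore suffices to exhibit one admissible distribution: the
alternating harmonic values `(-1)ⁿ / (n + 1)` under a geometric law on `ℕ`, which charges every
point. -/

theorem eq_zero_and_nonneg_of_frequently_affine_mul_nonneg {c₀ c₁ : ℝ}
    (hpos : ∃ᶠ d in 𝓝[>] 0, 0 ≤ (c₀ + c₁ * d) * d)
    (hneg : ∃ᶠ d in 𝓝[<] 0, 0 ≤ (c₀ + c₁ * d) * d) : c₀ = 0 ∧ 0 ≤ c₁ := by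
  have hlim : Tendsto (fun d => c₀ + c₁ * d) (𝓝 0) (𝓝 c₀) :=
    (by fun_prop : Continuous fun d : ℝ => c₀ + c₁ * d).tendsto' 0 c₀ (by simp)
  have hpos' : ∃ᶠ d in 𝓝[>] 0, 0 ≤ c₀ + c₁ * d ∧ 0 < d :=
    (hpos.and_eventually self_mem_nhdsWithin).mono fun d ⟨h, hd⟩ =>
      ⟨nonneg_of_mul_nonneg_left h hd, hd⟩
  have hneg' : ∃ᶠ d in 𝓝[<] 0, c₀ + c₁ * d ≤ 0 :=
    (hneg.and_eventually self_mem_nhdsWithin).mono fun d ⟨h, hd⟩ =>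
      nonpos_of_mul_nonneg_left h hd
  have hc₀ : c₀ = 0 := le_antisymm
    (le_of_tendsto_of_frequently (hlim.mono_left nhdsWithin_le_nhds) hneg')
    (ge_of_tendsto_of_frequently (hlim.mono_left nhdsWithin_le_nhds) (hpos'.mono fun _ h => h.1))
  obtain ⟨d, hd, hd₀⟩ := hpos'.exists
  exact ⟨hc₀, nonneg_of_mul_nonneg_left (by simpa [hc₀] using hd) hd₀⟩

noncomputable def alternatingHarmonic (n : ℕ) : ℝ := (-1) ^ n / (n + 1)

lemma alternatingHarmonic_two_mul (k : ℕ) : alternatingHarmonic (2 * k) = 1 / (2 * k + 1) := by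
  simp [alternatingHarmonic, pow_mul]

lemma alternatingHarmonic_two_mul_add_one (k : ℕ) :
    alternatingHarmonic (2 * k + 1) = -(1 / (2 * k + 2)) := by
  rw [alternatingHarmonic, pow_succ, pow_mul, neg_one_sq, one_pow]
  push_cast
  ring

lemma exists_alternatingHarmonic_mem_Ioo {ε : ℝ} (hε : 0 < ε) :
    (∃ n, alternatingHarmonic n ∈ Ioo 0 ε) ∧ ∃ n, alternatingHarmonic n ∈ Ioo (-ε) 0 := by
  obtain ⟨N, hN⟩ := exists_nat_one_div_lt hε
  have hlt : ∀ x : ℝ, N + 1 ≤ x → 1 / x < ε := fun x hx =>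
    lt_of_le_of_lt (one_div_le_one_div_of_le (by positivity) hx) hN
  have hN₀ : (0 : ℝ) ≤ N := N.cast_nonneg
  refine ⟨⟨2 * N, ?_⟩, ⟨2 * N + 1, ?_⟩⟩
  · rw [alternatingHarmonic_two_mul]
    exact ⟨by positivity, hlt _ (by linarith)⟩
  · rw [alternatingHarmonic_two_mul_add_one]
    exact ⟨neg_lt_neg (hlt _ (by linarith)), neg_neg_of_pos (by positivity)⟩

lemma frequently_mem_range_alternatingHarmonic :
    (∃ᶠ d in 𝓝[>] 0, d ∈ range alternatingHarmonic) ∧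
      ∃ᶠ d in 𝓝[<] 0, d ∈ range alternatingHarmonic := by
  refine ⟨(nhdsGT_basis 0).frequently_iff.2 fun ε hε => ?_,
    (nhdsLT_basis 0).frequently_iff.2 fun ε hε => ?_⟩
  · obtain ⟨n, hn⟩ := (exists_alternatingHarmonic_mem_Ioo hε).1
    exact ⟨_, hn, n, rfl⟩
  · obtain ⟨n, hn⟩ := (exists_alternatingHarmonic_mem_Ioo (neg_pos.2 hε)).2
    exact ⟨_, by simpa using hn, n, rfl⟩

lemma geometricMeasure_singleton_pos {p : unitInterval} (h0 : p ≠ 0) (h1 : p ≠ 1) (n : ℕ) :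
    0 < geometricMeasure p {n} := by
  rw [geometricMeasure_singleton h0]
  exact ENNReal.ofReal_pos.2 (geometricMeasure_pos h0 h1 n)

/-- If (c₀ + c₁·δ)·δ ≥ 0 a.s. for every distribution of δ taking strictly positive and
strictly negative values of arbitrarily small magnitude with positive probability,
then c₀ = 0 and c₁ ≥ 0. -/
theorem stmt5 (c₀ c₁ : ℝ)
    (h : ∀ (Ω : Type) (_ : MeasurableSpace Ω) (μ : Measure Ω), IsProbabilityMeasure μ →
      ∀ δ : Ω → ℝ, Measurable δ →
      (0 < μ {ω | 0 < δ ω}) → (0 < μ {ω | δ ω < 0}) →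
      (∀ ε > 0, (∃ d, 0 < d ∧ d < ε ∧ 0 < μ {ω | δ ω = d}) ∧
                (∃ d, -ε < d ∧ d < 0 ∧ 0 < μ {ω | δ ω = d})) →
      (∀ᵐ ω ∂μ, 0 ≤ (c₀ + c₁ * δ ω) * δ ω)) :
    c₀ = 0 ∧ 0 ≤ c₁ := by
  set p : unitInterval := ⟨2⁻¹, by norm_num, by norm_num⟩
  have hp0 : p ≠ 0 := by simp [p, ← Subtype.coe_ne_coe]
  have hp1 : p ≠ 1 := by simp [p, ← Subtype.coe_ne_coe]
  have hμ : ∀ {s : Set ℕ} {n}, n ∈ s → 0 < geometricMeasure p s := fun hn =>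
    (geometricMeasure_singleton_pos hp0 hp1 _).trans_le (measure_mono (singleton_subset_iff.2 hn))
  obtain ⟨⟨nPos, hnPos⟩, ⟨nNeg, hnNeg⟩⟩ := exists_alternatingHarmonic_mem_Ioo one_pos
  have hae := h ℕ _ (geometricMeasure p) inferInstance alternatingHarmonic
    (measurable_of_countable _) (hμ hnPos.1) (hμ hnNeg.2) fun ε hε => by
      obtain ⟨⟨mPos, hmPos⟩, ⟨mNeg, hmNeg⟩⟩ := exists_alternatingHarmonic_mem_Ioo hε
      exact ⟨⟨_, hmPos.1, hmPos.2, hμ (n := mPos) rfl⟩, ⟨_, hmNeg.1, hmNeg.2, hμ (n := mNeg) rfl⟩⟩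
  have hall : ∀ n, 0 ≤ (c₀ + c₁ * alternatingHarmonic n) * alternatingHarmonic n :=
    fun n => ae_iff_of_countable.1 hae n (hμ (mem_singleton n)).ne'
  obtain ⟨hpos, hneg⟩ := frequently_mem_range_alternatingHarmonic
  exact eq_zero_and_nonneg_of_frequently_affine_mul_nonneg
    (hpos.mono fun _ ⟨n, hn⟩ => hn ▸ hall n) (hneg.mono fun _ ⟨n, hn⟩ => hn ▸ hall n)
end

section
/- Let W have finite support, δ_X a nonnegative function with E[δ_X(W)] > 0, and π_j = P(W = w_j). Then p(w_j) := δ_X(w_j)·π_j / E[δ_X(W)] defines a probability function (nonnegative, summing to 1), and the WLATE induced by the policy p via instrument b(w) = p(w)/π(w) has weights ω_j proportional to π_j·δ_X(w_j)², i.e., it equals the Compliance-Weighted LATE β_CW = Σ_j π_j δ_X(w_j)δ_Y(w_j) / Σ_j π_j δ_X(w_j)² whenever δ_Y(w) = β(w)δ_X(w) for all w. -/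
open Finset

section CompliancePolicy

variable {ι : Type*} [Fintype ι] (π δX : ι → ℝ)

/-- The policy `p(w) = δ_X(w) π(w) / E[δ_X(W)]`. -/
noncomputable def compliancePolicy (j : ι) : ℝ :=
  δX j * π j / ∑ k, π k * δX k

theorem compliancePolicy_nonneg (hπ : ∀ j, 0 ≤ π j) (hδX : ∀ j, 0 ≤ δX j) (j : ι) :
    0 ≤ compliancePolicy π δX j :=
  div_nonneg (mul_nonneg (hδX j) (hπ j))
    (sum_nonneg fun k _ => mul_nonneg (hπ k) (hδX k))

theorem sum_compliancePolicy (hE : ∑ k, π k * δX k ≠ 0) :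
    ∑ j, compliancePolicy π δX j = 1 := by
  simp only [compliancePolicy, ← sum_div, mul_comm (δX _)]
  exact div_self hE

theorem mul_compliancePolicy_div_mul {j : ι} (hπ : π j ≠ 0) (x : ℝ) :
    π j * (compliancePolicy π δX j / π j) * x = π j * δX j * x / ∑ k, π k * δX k := by
  rw [mul_div_cancel₀ _ hπ, compliancePolicy]
  ring

theorem sum_mul_compliancePolicy_div_mul (hπ : ∀ j, π j ≠ 0) (f : ι → ℝ) :
    ∑ j, π j * (compliancePolicy π δX j / π j) * f j =
      (∑ j, π j * δX j * f j) / ∑ k, π k * δX k := by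
  simp only [mul_compliancePolicy_div_mul π δX (hπ _), sum_div]

theorem compliancePolicy_wlate_weight (hπ : ∀ j, π j ≠ 0) (hE : ∑ k, π k * δX k ≠ 0) (j : ι) :
    π j * (compliancePolicy π δX j / π j) * δX j /
        ∑ k, π k * (compliancePolicy π δX k / π k) * δX k =
      π j * δX j ^ 2 / ∑ k, π k * δX k ^ 2 := by
  rw [mul_compliancePolicy_div_mul π δX (hπ j), sum_mul_compliancePolicy_div_mul π δX hπ,
    div_div_div_cancel_right₀ hE]
  simp only [mul_assoc, sq]

theorem compliancePolicy_wlate (hπ : ∀ j, π j ≠ 0) (hE : ∑ k, π k * δX k ≠ 0) (δY : ι → ℝ) :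
    (∑ j, π j * (compliancePolicy π δX j / π j) * δY j) /
        (∑ j, π j * (compliancePolicy π δX j / π j) * δX j) =
      (∑ j, π j * δX j * δY j) / ∑ j, π j * δX j ^ 2 := by
  rw [sum_mul_compliancePolicy_div_mul π δX hπ, sum_mul_compliancePolicy_div_mul π δX hπ,
    div_div_div_cancel_right₀ hE]
  simp only [mul_assoc, sq]

end CompliancePolicy

theorem stmt13_general {m : ℕ} (π δX δY : Fin m → ℝ)
    (hπ : ∀ j, 0 < π j)
    (hδnn : ∀ j, 0 ≤ δX j)
    (hE : 0 < ∑ j, π j * δX j) :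
    (∀ j, 0 ≤ δX j * π j / (∑ k, π k * δX k)) ∧
    (∑ j, δX j * π j / (∑ k, π k * δX k)) = 1 ∧
    (∀ j, π j * ((δX j * π j / (∑ k, π k * δX k)) / π j) * δX j /
        (∑ k, π k * ((δX k * π k / (∑ l, π l * δX l)) / π k) * δX k) =
      π j * δX j ^ 2 / (∑ k, π k * δX k ^ 2)) ∧
    (∑ j, π j * ((δX j * π j / (∑ k, π k * δX k)) / π j) * δY j) /
        (∑ j, π j * ((δX j * π j / (∑ k, π k * δX k)) / π j) * δX j) =
      (∑ j, π j * δX j * δY j) / (∑ j, π j * δX j ^ 2) := by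
  have hπ₀ : ∀ j, π j ≠ 0 := fun j => (hπ j).ne'
  exact ⟨compliancePolicy_nonneg π δX (fun j => (hπ j).le) hδnn,
    sum_compliancePolicy π δX hE.ne',
    compliancePolicy_wlate_weight π δX hπ₀ hE.ne',
    compliancePolicy_wlate π δX hπ₀ hE.ne' δY⟩

/-- The policy p(w) ∝ δ_X(w)π(w) is a probability function, and the WLATE it induces via
instrument b = p/π has weights proportional to π δ_X² — i.e., it equals the CWLATE. -/
theorem stmt13 {m : ℕ} (π δX δY β : Fin m → ℝ)
    (hπ : ∀ j, 0 < π j) (hπsum : ∑ j, π j = 1)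
    (hδnn : ∀ j, 0 ≤ δX j)
    (hE : 0 < ∑ j, π j * δX j)
    (hWald : ∀ j, δY j = β j * δX j) :
    (∀ j, 0 ≤ δX j * π j / (∑ k, π k * δX k)) ∧
    (∑ j, δX j * π j / (∑ k, π k * δX k)) = 1 ∧
    (∀ j, π j * ((δX j * π j / (∑ k, π k * δX k)) / π j) * δX j /
        (∑ k, π k * ((δX k * π k / (∑ l, π l * δX l)) / π k) * δX k) =
      π j * δX j ^ 2 / (∑ k, π k * δX k ^ 2)) ∧
    (∑ j, π j * ((δX j * π j / (∑ k, π k * δX k)) / π j) * δY j) /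
        (∑ j, π j * ((δX j * π j / (∑ k, π k * δX k)) / π j) * δX j) =
      (∑ j, π j * δX j * δY j) / (∑ j, π j * δX j ^ 2) :=
  stmt13_general π δX δY hπ hδnn hE
end

section
/- Let W take two values {−1, 1} with equal probability, let δ_X(−1) = d₁ > 0 and δ_X(1) = d₂ > 0 with d₁ ≠ d₂, and δ_Y(w) = β(w)δ_X(w). Then the unconditional-style LATE β_U := (½δ_Y(−1) + ½δ_Y(1))/(½δ_X(−1) + ½δ_X(1)) and the compliance-weighted LATE β_CW := (½δ_X(−1)δ_Y(−1) + ½δ_X(1)δ_Y(1))/(½δ_X(−1)² + ½δ_X(1)²) satisfy: β_CW − β_U = d₁d₂(d₂ − d₁)(β(1) − β(−1))/((d₁ + d₂)·(d₁² + d₂²)/2)·(1/2). In particular, β_CW = β_U if and only if β(1) = β(−1) or d₁ = d₂. -/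
/-!
Over a common denominator, `β_CW − β_U` has numerator
`(d₁²βm + d₂²βp)(d₁ + d₂) − (d₁βm + d₂βp)(d₁² + d₂²) = d₁d₂(d₂ − d₁)(βp − βm)`,
and both denominators are positive, so the estimands agree exactly when a factor of this
product vanishes.
-/

section TwoCellLate

variable {K : Type*} [Field K]

/-- The paper's `β_U`, in the encoding `δ_X(−1) = d₁`, `δ_X(1) = d₂`, `β(−1) = βm`, `β(1) = βp`. -/
def unconditionalLate (d₁ d₂ βm βp : K) : K :=
  ((1 / 2) * (βm * d₁) + (1 / 2) * (βp * d₂)) / ((1 / 2) * d₁ + (1 / 2) * d₂)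

/-- The paper's `β_CW`, in the same encoding. -/
def complianceWeightedLate (d₁ d₂ βm βp : K) : K :=
  ((1 / 2) * (d₁ * (βm * d₁)) + (1 / 2) * (d₂ * (βp * d₂))) /
    ((1 / 2) * d₁ ^ 2 + (1 / 2) * d₂ ^ 2)

theorem complianceWeightedLate_sub_unconditionalLate [NeZero (2 : K)] {d₁ d₂ : K}
    (hs : d₁ + d₂ ≠ 0) (hq : d₁ ^ 2 + d₂ ^ 2 ≠ 0) (βm βp : K) :
    complianceWeightedLate d₁ d₂ βm βp - unconditionalLate d₁ d₂ βm βp =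
      d₁ * d₂ * (d₂ - d₁) * (βp - βm) / ((d₁ + d₂) * (d₁ ^ 2 + d₂ ^ 2)) := by
  have two_ne : (2 : K) ≠ 0 := two_ne_zero
  have hs' : (1 / 2) * d₁ + (1 / 2) * d₂ ≠ 0 := by
    rw [← mul_add]; exact mul_ne_zero (by simpa using two_ne) hs
  have hq' : (1 / 2) * d₁ ^ 2 + (1 / 2) * d₂ ^ 2 ≠ 0 := by
    rw [← mul_add]; exact mul_ne_zero (by simpa using two_ne) hq
  unfold complianceWeightedLate unconditionalLate
  rw [div_sub_div _ _ hq' hs', div_eq_div_iff (mul_ne_zero hq' hs') (mul_ne_zero hs hq)]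
  ring

theorem complianceWeightedLate_eq_unconditionalLate_iff [NeZero (2 : K)] {d₁ d₂ : K}
    (h₁ : d₁ ≠ 0) (h₂ : d₂ ≠ 0) (hs : d₁ + d₂ ≠ 0) (hq : d₁ ^ 2 + d₂ ^ 2 ≠ 0) (βm βp : K) :
    complianceWeightedLate d₁ d₂ βm βp = unconditionalLate d₁ d₂ βm βp ↔
      βp = βm ∨ d₁ = d₂ := by
  rw [← sub_eq_zero, complianceWeightedLate_sub_unconditionalLate hs hq,
    div_eq_zero_iff, or_iff_left (mul_ne_zero hs hq)]
  simp only [mul_eq_zero, h₁, h₂, sub_eq_zero, false_or]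
  exact or_comm.trans (or_congr_right eq_comm)

end TwoCellLate

theorem stmt19_general (d₁ d₂ βm βp : ℝ) (h1 : 0 < d₁) (h2 : 0 < d₂) :
    ((1 / 2) * (d₁ * (βm * d₁)) + (1 / 2) * (d₂ * (βp * d₂))) /
        ((1 / 2) * d₁ ^ 2 + (1 / 2) * d₂ ^ 2) -
      ((1 / 2) * (βm * d₁) + (1 / 2) * (βp * d₂)) / ((1 / 2) * d₁ + (1 / 2) * d₂) =
        d₁ * d₂ * (d₂ - d₁) * (βp - βm) /
          ((d₁ + d₂) * (d₁ ^ 2 + d₂ ^ 2) / 2) * (1 / 2)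
    ∧ (((1 / 2) * (d₁ * (βm * d₁)) + (1 / 2) * (d₂ * (βp * d₂))) /
          ((1 / 2) * d₁ ^ 2 + (1 / 2) * d₂ ^ 2) =
        ((1 / 2) * (βm * d₁) + (1 / 2) * (βp * d₂)) / ((1 / 2) * d₁ + (1 / 2) * d₂)
        ↔ βp = βm ∨ d₁ = d₂) := by
  have hs : d₁ + d₂ ≠ 0 := by positivity
  have hq : d₁ ^ 2 + d₂ ^ 2 ≠ 0 := by positivity
  refine ⟨(complianceWeightedLate_sub_unconditionalLate hs hq βm βp).trans (by rw [div_div_eq_mul_div]; ring),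
    complianceWeightedLate_eq_unconditionalLate_iff h1.ne' h2.ne' hs hq βm βp⟩

/-- Explicit two-cell comparison of the unconditional LATE and the compliance-weighted
LATE: β_CW − β_U is proportional to d₁d₂(d₂−d₁)(β(1)−β(−1)), so the two estimands
coincide iff treatment effects or first stages are homogeneous. -/
theorem stmt19 (d₁ d₂ βm βp : ℝ) (h1 : 0 < d₁) (h2 : 0 < d₂) (hne : d₁ ≠ d₂) :
    ((1 / 2) * (d₁ * (βm * d₁)) + (1 / 2) * (d₂ * (βp * d₂))) /
        ((1 / 2) * d₁ ^ 2 + (1 / 2) * d₂ ^ 2) -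
      ((1 / 2) * (βm * d₁) + (1 / 2) * (βp * d₂)) / ((1 / 2) * d₁ + (1 / 2) * d₂) =
        d₁ * d₂ * (d₂ - d₁) * (βp - βm) /
          ((d₁ + d₂) * (d₁ ^ 2 + d₂ ^ 2) / 2) * (1 / 2)
    ∧ (((1 / 2) * (d₁ * (βm * d₁)) + (1 / 2) * (d₂ * (βp * d₂))) /
          ((1 / 2) * d₁ ^ 2 + (1 / 2) * d₂ ^ 2) =
        ((1 / 2) * (βm * d₁) + (1 / 2) * (βp * d₂)) / ((1 / 2) * d₁ + (1 / 2) * d₂)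
        ↔ βp = βm ∨ d₁ = d₂) :=
  stmt19_general d₁ d₂ βm βp h1 h2
end
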